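/- Fix D ≥ 1, ε > 0 and δ₁ > δ₂ > ⋯ > δ_D > 0 with δ₁ < ε. For 1 ≤ i ≤ D and z ∈ V_{D−i+1}, define the domain A_{i,z} ⊆ ℝ^D by A_{1,z} := H_z^{δ₁} and, for i ≥ 2, A_{i,z} := convex hull of H_z^{δ_i} ∪ H_z^{δ_{i−1}}. Then the closures of all these domains are pairwise disjoint: if (i, z) ≠ (j, w) with 1 ≤ i, j ≤ D, z ∈ V_{D−i+1}, w ∈ V_{D−j+1}, then closure(A_{i,z}) ∩ closure(A_{j,w}) = ∅. -/

import Mathlib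

/-- `r` is a half-integer: `r = n/2` with `n` an odd integer. -/
def IsHalfInt (r : ℝ) : Prop := ∃ n : ℤ, Odd n ∧ r = (n : ℝ) / 2

/-- `V_j`: the set of points of `ℝ^D` having exactly `j` integer coordinates, the
remaining `D - j` coordinates being half-integers. -/
def VsetJ (D j : ℕ) : Set (Fin D → ℝ) :=
  {z | ∃ S : Finset (Fin D), S.card = j ∧ (∀ k ∈ S, ∃ m : ℤ, z k = (m : ℝ)) ∧
       ∀ k ∉ S, IsHalfInt (z k)}

/-- The open box `H_z^δ`: coordinates with `z_k ∈ ℤ` are within `(ε-δ)/2` of `ε z_k`,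
coordinates with `z_k` a half-integer are within `δ/4` of `ε z_k`. -/
def Hcube (D : ℕ) (ε δ : ℝ) (z : Fin D → ℝ) : Set (Fin D → ℝ) :=
  {a | ∀ k, ((∃ m : ℤ, z k = (m : ℝ)) → |a k - ε * z k| < (ε - δ) / 2) ∧
            (IsHalfInt (z k) → |a k - ε * z k| < δ / 4)}

/-- The domain `A_{i,z}`: for `i = 1` the cube `H_z^{δ₁}`, and for `i ≥ 2` the convex
hull of `H_z^{δ_i} ∪ H_z^{δ_{i-1}}`. -/
def domA (D : ℕ) (ε : ℝ) (δ : ℕ → ℝ) (i : ℕ) (z : Fin D → ℝ) : Set (Fin D → ℝ) :=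
  if i = 1 then Hcube D ε (δ 1) z
  else convexHull ℝ (Hcube D ε (δ i) z ∪ Hcube D ε (δ (i - 1)) z)

/-!
The closure of `A_{i,z}` lies in a closed convex set cut out around `ε z` by the bounds
`(ε - δ_i)/2` on integer coordinates, `δ_{i-1}/4` on half-integer ones, and
`2|a_k - ε z_k| + 4|a_l - ε z_l| ≤ ε` for `k` an integer and `l` a half-integer coordinate.
Suppose a point lies in two such sets, for `(i, z)` and `(j, w)`. Where `z_k ≠ w_k` the centres
`ε z_k`, `ε w_k` are at distance `≥ ε` (same type) or `≥ ε/2` (mixed type), which the bounds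
cannot bridge: for a mixed coordinate this uses `δ_{j-1} ≤ δ_i` when the integer coordinates of
`w` are among those of `z` (so `i < j`), and the coupled bounds at a crossing pair of coordinates
otherwise. Hence `z = w`, and then `i = j` because `z` determines its number of integer
coordinates.
-/

open Set

lemma IsHalfInt.exists_eq_intCast_add_half {x : ℝ} (hx : IsHalfInt x) :
    ∃ m : ℤ, x = m + 1 / 2 := by
  obtain ⟨n, ⟨m, rfl⟩, rfl⟩ := hx
  exact ⟨m, by push_cast; ring⟩

lemma one_le_abs_intCast_sub_intCast {m n : ℤ} (h : m ≠ n) : 1 ≤ |(m : ℝ) - n| := by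
  exact_mod_cast Int.one_le_abs (sub_ne_zero.2 h)

lemma IsHalfInt.one_half_le_abs_sub {x y : ℝ} (hx : ∃ m : ℤ, x = m) (hy : IsHalfInt y) :
    1 / 2 ≤ |x - y| := by
  obtain ⟨m, rfl⟩ := hx
  obtain ⟨n, rfl⟩ := hy.exists_eq_intCast_add_half
  rcases le_or_gt m n with hmn | hmn
  · have : (m : ℝ) ≤ n := by exact_mod_cast hmn
    rw [abs_of_neg (by linarith)]; linarith
  · have : (n : ℝ) + 1 ≤ m := by exact_mod_cast hmn
    rw [abs_of_pos (by linarith)]; linarith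

lemma IsHalfInt.one_le_abs_sub {x y : ℝ} (hx : IsHalfInt x) (hy : IsHalfInt y) (h : x ≠ y) :
    1 ≤ |x - y| := by
  obtain ⟨m, rfl⟩ := hx.exists_eq_intCast_add_half
  obtain ⟨n, rfl⟩ := hy.exists_eq_intCast_add_half
  have hmn : m ≠ n := by rintro rfl; exact h rfl
  simpa using one_le_abs_intCast_sub_intCast hmn

lemma IsHalfInt.not_exists_intCast_eq {x : ℝ} (hx : IsHalfInt x) : ¬∃ m : ℤ, x = m := by
  intro hint
  have := hx.one_half_le_abs_sub hint
  norm_num at this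

section VsetJ

variable {D p : ℕ} {z : Fin D → ℝ}

lemma int_or_isHalfInt_of_mem_VsetJ (hz : z ∈ VsetJ D p) (k : Fin D) :
    (∃ m : ℤ, z k = m) ∨ IsHalfInt (z k) := by
  obtain ⟨S, -, hint, hhalf⟩ := hz
  by_cases hk : k ∈ S
  exacts [.inl (hint k hk), .inr (hhalf k hk)]

open Classical in
lemma card_filter_int_of_mem_VsetJ (hz : z ∈ VsetJ D p) :
    (Finset.univ.filter fun k => ∃ m : ℤ, z k = m).card = p := by
  obtain ⟨S, rfl, hint, hhalf⟩ := hz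
  congr
  ext k
  simp only [Finset.mem_filter, Finset.mem_univ, true_and]
  exact ⟨fun h => by_contra fun hk => (hhalf k hk).not_exists_intCast_eq h, hint k⟩

lemma eq_of_mem_VsetJ_of_mem_VsetJ {q : ℕ} (hp : z ∈ VsetJ D p) (hq : z ∈ VsetJ D q) : p = q :=
  (card_filter_int_of_mem_VsetJ hp).symm.trans (card_filter_int_of_mem_VsetJ hq)

end VsetJ

lemma convexOn_abs_apply_sub {ι : Type*} (k : ι) (c : ℝ) :
    ConvexOn ℝ univ fun a : ι → ℝ => |a k - c| := by
  simpa [Function.comp_def] using (convexOn_norm (E := ℝ) convex_univ).comp_affineMap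
    ((AffineMap.proj k : (ι → ℝ) →ᵃ[ℝ] ℝ) - AffineMap.const ℝ (ι → ℝ) c)

/-- The coupled bound holds on `Hcube D ε s z` for every `s`, since `2 (ε - s)/2 + 4 s/4 = ε`,
hence on convex hulls of such cubes; it is what separates domains whose integer coordinates
cross. -/
def HcubeEnvelope (D : ℕ) (ε α β : ℝ) (z : Fin D → ℝ) : Set (Fin D → ℝ) :=
  {a | ∀ k, ((∃ m : ℤ, z k = (m : ℝ)) → |a k - ε * z k| ≤ (ε - α) / 2) ∧
            (IsHalfInt (z k) → |a k - ε * z k| ≤ β / 4) ∧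
            (∀ l, (∃ m : ℤ, z k = (m : ℝ)) → IsHalfInt (z l) →
              2 * |a k - ε * z k| + 4 * |a l - ε * z l| ≤ ε)}

section HcubeEnvelope

variable {D : ℕ} {ε α β : ℝ} {z : Fin D → ℝ}

lemma isClosed_HcubeEnvelope : IsClosed (HcubeEnvelope D ε α β z) := by
  simp only [HcubeEnvelope, ofPred_forall, ofPred_and]
  refine isClosed_iInter fun k => ((isClosed_iInter fun _ => ?_).inter
    ((isClosed_iInter fun _ => ?_).inter (isClosed_iInter fun l => isClosed_iInter fun _ =>
      isClosed_iInter fun _ => ?_))) <;>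
  exact isClosed_le (by fun_prop) continuous_const

lemma convex_HcubeEnvelope : Convex ℝ (HcubeEnvelope D ε α β z) := by
  have hle : ∀ {f : (Fin D → ℝ) → ℝ}, ConvexOn ℝ univ f → ∀ r, Convex ℝ {a | f a ≤ r} :=
    fun hf r => by simpa only [sep_univ] using hf.convex_le r
  simp only [HcubeEnvelope, ofPred_forall, ofPred_and]
  refine convex_iInter fun k => ((convex_iInter fun _ => ?_).inter
    ((convex_iInter fun _ => ?_).inter (convex_iInter fun l => convex_iInter fun _ =>
      convex_iInter fun _ => ?_)))
  · exact hle (convexOn_abs_apply_sub k _) _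
  · exact hle (convexOn_abs_apply_sub k _) _
  · exact hle (((convexOn_abs_apply_sub k _).smul zero_le_two).add
      ((convexOn_abs_apply_sub l _).smul zero_le_four)) _

lemma Hcube_subset_HcubeEnvelope {s : ℝ} (hα : α ≤ s) (hβ : s ≤ β) :
    Hcube D ε s z ⊆ HcubeEnvelope D ε α β z := by
  intro a ha k
  refine ⟨fun hk => ?_, fun hk => ?_, fun l hk hl => ?_⟩
  · linarith [(ha k).1 hk]
  · linarith [(ha k).2 hk]
  · linarith [(ha k).1 hk, (ha l).2 hl]

lemma closure_domA_subset_HcubeEnvelope {δ : ℕ → ℝ} {i : ℕ} (hi : 1 ≤ i)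
    (hδ : δ i ≤ δ (max 1 (i - 1))) :
    closure (domA D ε δ i z) ⊆ HcubeEnvelope D ε (δ i) (δ (max 1 (i - 1))) z := by
  refine closure_minimal ?_ isClosed_HcubeEnvelope
  unfold domA
  split_ifs with hi1
  · subst hi1
    exact Hcube_subset_HcubeEnvelope le_rfl le_rfl
  · rw [show max 1 (i - 1) = i - 1 by omega] at hδ ⊢
    exact convexHull_min (union_subset (Hcube_subset_HcubeEnvelope le_rfl hδ)
      (Hcube_subset_HcubeEnvelope hδ le_rfl)) convex_HcubeEnvelope

end HcubeEnvelope

lemma mul_abs_sub_le_abs_sub_add_abs_sub {ε : ℝ} (hε : 0 ≤ ε) (a x y : ℝ) :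
    ε * |x - y| ≤ |a - ε * x| + |a - ε * y| := by
  rw [← abs_of_nonneg hε, ← abs_mul, abs_of_nonneg hε, mul_sub, abs_sub_comm a]
  exact abs_sub_le _ _ _

section Separation

variable {D : ℕ} {ε α β α' β' : ℝ} {z w a : Fin D → ℝ} {k l : Fin D}

lemma HcubeEnvelope.apply_eq_of_int (hε : 0 ≤ ε) (hαα' : 0 < α + α')
    (ha : a ∈ HcubeEnvelope D ε α β z) (hb : a ∈ HcubeEnvelope D ε α' β' w)
    (hz : ∃ m : ℤ, z k = m) (hw : ∃ m : ℤ, w k = m) : z k = w k := by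
  by_contra hne
  obtain ⟨m, hm⟩ := hz
  obtain ⟨n, hn⟩ := hw
  have hsep : 1 ≤ |z k - w k| := by
    rw [hm, hn]; exact one_le_abs_intCast_sub_intCast fun h => hne (by rw [hm, hn, h])
  nlinarith [mul_abs_sub_le_abs_sub_add_abs_sub hε (a k) (z k) (w k), (ha k).1 ⟨m, hm⟩,
    (hb k).1 ⟨n, hn⟩]

lemma HcubeEnvelope.apply_eq_of_isHalfInt (hε : 0 ≤ ε) (hββ' : β + β' < 4 * ε)
    (ha : a ∈ HcubeEnvelope D ε α β z) (hb : a ∈ HcubeEnvelope D ε α' β' w)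
    (hz : IsHalfInt (z k)) (hw : IsHalfInt (w k)) : z k = w k := by
  by_contra hne
  nlinarith [hz.one_le_abs_sub hw hne, mul_abs_sub_le_abs_sub_add_abs_sub hε (a k) (z k) (w k),
    (ha k).2.1 hz, (hb k).2.1 hw]

lemma HcubeEnvelope.false_of_int_of_isHalfInt (hε : 0 ≤ ε) (hβ'α : β' < 2 * α)
    (ha : a ∈ HcubeEnvelope D ε α β z) (hb : a ∈ HcubeEnvelope D ε α' β' w)
    (hz : ∃ m : ℤ, z k = m) (hw : IsHalfInt (w k)) : False := by
  nlinarith [hw.one_half_le_abs_sub hz, mul_abs_sub_le_abs_sub_add_abs_sub hε (a k) (z k) (w k),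
    (ha k).1 hz, (hb k).2.1 hw]

lemma HcubeEnvelope.false_of_crossing (hε : 0 ≤ ε) (hαα' : 0 < α + α')
    (ha : a ∈ HcubeEnvelope D ε α β z) (hb : a ∈ HcubeEnvelope D ε α' β' w)
    (hzk : ∃ m : ℤ, z k = m) (hwk : IsHalfInt (w k))
    (hzl : IsHalfInt (z l)) (hwl : ∃ m : ℤ, w l = m) : False := by
  have hk := mul_abs_sub_le_abs_sub_add_abs_sub hε (a k) (z k) (w k)
  have hl := mul_abs_sub_le_abs_sub_add_abs_sub hε (a l) (z l) (w l)
  have hsepk := hwk.one_half_le_abs_sub hzk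
  have hsepl := hzl.one_half_le_abs_sub hwl
  rw [abs_sub_comm] at hsepl
  -- Added up, the coupled bounds and the separations force `a_k = ε w_k` and `a_l = ε z_l`,
  -- and then the integer bounds at `k` and `l` leave no room.
  nlinarith [(ha k).1 hzk, (hb l).1 hwl, (ha k).2.2 l hzk hzl, (hb l).2.2 k hwl hwk,
    abs_nonneg (a k - ε * w k), abs_nonneg (a l - ε * z l)]

open Classical in
lemma HcubeEnvelope.false_of_mem_VsetJ_of_int_of_isHalfInt {p q : ℕ} (hε : 0 ≤ ε)
    (hαα' : 0 < α + α') (hqp : q < p → β' < 2 * α) (hz : z ∈ VsetJ D p) (hw : w ∈ VsetJ D q)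
    (ha : a ∈ HcubeEnvelope D ε α β z) (hb : a ∈ HcubeEnvelope D ε α' β' w)
    (hzk : ∃ m : ℤ, z k = m) (hwk : IsHalfInt (w k)) : False := by
  by_cases hcross : ∃ l, IsHalfInt (z l) ∧ ∃ m : ℤ, w l = m
  · obtain ⟨l, hzl, hwl⟩ := hcross
    exact false_of_crossing hε hαα' ha hb hzk hwk hzl hwl
  have hsub : (Finset.univ.filter fun l => ∃ m : ℤ, w l = m) ⊂
      Finset.univ.filter fun l => ∃ m : ℤ, z l = m := by
    refine (Finset.ssubset_iff_of_subset fun l hl => ?_).2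
      ⟨k, by simpa using hzk, by simpa using hwk.not_exists_intCast_eq⟩
    simp only [Finset.mem_filter, Finset.mem_univ, true_and] at hl ⊢
    exact (int_or_isHalfInt_of_mem_VsetJ hz l).resolve_right fun hzl => hcross ⟨l, hzl, hl⟩
  have hcard := Finset.card_lt_card hsub
  rw [card_filter_int_of_mem_VsetJ hz, card_filter_int_of_mem_VsetJ hw] at hcard
  exact false_of_int_of_isHalfInt hε (hqp hcard) ha hb hzk hwk

lemma HcubeEnvelope.eq_of_mem_VsetJ {p q : ℕ} (hε : 0 ≤ ε) (hαα' : 0 < α + α')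
    (hββ' : β + β' < 4 * ε) (hqp : q < p → β' < 2 * α) (hpq : p < q → β < 2 * α')
    (hz : z ∈ VsetJ D p) (hw : w ∈ VsetJ D q)
    (ha : a ∈ HcubeEnvelope D ε α β z) (hb : a ∈ HcubeEnvelope D ε α' β' w) : z = w := by
  funext k
  rcases int_or_isHalfInt_of_mem_VsetJ hz k with hzk | hzk <;>
    rcases int_or_isHalfInt_of_mem_VsetJ hw k with hwk | hwk
  · exact apply_eq_of_int hε hαα' ha hb hzk hwk
  · exact (false_of_mem_VsetJ_of_int_of_isHalfInt hε hαα' hqp hz hw ha hb hzk hwk).elim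
  · exact (false_of_mem_VsetJ_of_int_of_isHalfInt hε (by linarith) hpq hw hz hb ha hwk hzk).elim
  · exact apply_eq_of_isHalfInt hε hββ' ha hb hzk hwk

end Separation

theorem geometric_scheme_domains_disjoint_general (D : ℕ) (ε : ℝ) (hε : 0 < ε)
    (δ : ℕ → ℝ) (hpos : ∀ i, 1 ≤ i → i ≤ D → 0 < δ i)
    (hanti : ∀ i j, 1 ≤ i → i < j → j ≤ D → δ j < δ i) (hδ₁ε : δ 1 < ε)
    (i j : ℕ) (hi1 : 1 ≤ i) (hiD : i ≤ D) (hj1 : 1 ≤ j) (hjD : j ≤ D)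
    (z w : Fin D → ℝ) (hz : z ∈ VsetJ D (D - i + 1)) (hw : w ∈ VsetJ D (D - j + 1))
    (hne : ¬(i = j ∧ z = w)) :
    closure (domA D ε δ i z) ∩ closure (domA D ε δ j w) = ∅ := by
  have hmono : ∀ m n, 1 ≤ m → m ≤ n → n ≤ D → δ n ≤ δ m := fun m n hm hmn hn =>
    hmn.eq_or_lt.elim (fun h => h ▸ le_rfl) fun h => (hanti m n hm h hn).le
  have hK : ∀ n c, 1 ≤ n → n ≤ D →
      closure (domA D ε δ n c) ⊆ HcubeEnvelope D ε (δ n) (δ (max 1 (n - 1))) c :=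
    fun n c hn hnD => closure_domA_subset_HcubeEnvelope hn (hmono _ n (by omega) (by omega) hnD)
  refine eq_empty_iff_forall_notMem.2 fun a ⟨ha, hb⟩ => ?_
  obtain rfl : z = w := HcubeEnvelope.eq_of_mem_VsetJ hε.le
    (add_pos (hpos i hi1 hiD) (hpos j hj1 hjD))
    (by linarith [hmono 1 (max 1 (i - 1)) le_rfl (by omega) (by omega),
      hmono 1 (max 1 (j - 1)) le_rfl (by omega) (by omega)])
    (fun h => by linarith [hmono i (max 1 (j - 1)) hi1 (by omega) (by omega), hpos i hi1 hiD])
    (fun h => by linarith [hmono j (max 1 (i - 1)) hj1 (by omega) (by omega), hpos j hj1 hjD])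
    hz hw (hK i z hi1 hiD ha) (hK j w hj1 hjD hb)
  have := eq_of_mem_VsetJ_of_mem_VsetJ hz hw
  exact hne ⟨by omega, rfl⟩

/-- Lemma 5.3: for `ε > δ₁ > δ₂ > ⋯ > δ_D > 0`, the closures of all the domains
`A_{i,z}` (`1 ≤ i ≤ D`, `z ∈ V_{D-i+1}`) are pairwise disjoint. -/
theorem geometric_scheme_domains_disjoint (D : ℕ) (hD : 1 ≤ D) (ε : ℝ) (hε : 0 < ε)
    (δ : ℕ → ℝ) (hpos : ∀ i, 1 ≤ i → i ≤ D → 0 < δ i)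
    (hanti : ∀ i j, 1 ≤ i → i < j → j ≤ D → δ j < δ i) (hδ₁ε : δ 1 < ε)
    (i j : ℕ) (hi1 : 1 ≤ i) (hiD : i ≤ D) (hj1 : 1 ≤ j) (hjD : j ≤ D)
    (z w : Fin D → ℝ) (hz : z ∈ VsetJ D (D - i + 1)) (hw : w ∈ VsetJ D (D - j + 1))
    (hne : ¬(i = j ∧ z = w)) :
    closure (domA D ε δ i z) ∩ closure (domA D ε δ j w) = ∅ :=
  geometric_scheme_domains_disjoint_general D ε hε δ hpos hanti hδ₁ε i j hi1 hiD hj1 hjD z w hz hw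
    hne
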